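/- Let G₁ and G₂ be finite simple graphs that are both strongly regular with the same parameters (N, k, λ, μ), where k ≥ 1, and let M₁ = k⁻¹·A₁ and M₂ = k⁻¹·A₂ be their random-walk matrices. Then for every n ∈ ℕ the RRWP values are determined solely by the parameters and the adjacency type of the pair: (M₁ⁿ)_{u,u} = (M₂ⁿ)_{u',u'} for all vertices u of G₁ and u' of G₂; (M₁ⁿ)_{u,v} = (M₂ⁿ)_{u',v'} whenever u and v are adjacent in G₁ and u' and v' are adjacent in G₂; and (M₁ⁿ)_{u,v} = (M₂ⁿ)_{u',v'} whenever u ≠ v are non-adjacent in G₁ and u' ≠ v' are non-adjacent in G₂. Hence the relative random walk probability encodings cannot distinguish two strongly regular graphs with the same parameters. -/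

import Mathlib

/-!
The identity `I`, the adjacency matrix `A` and the adjacency matrix `Ā` of the complement of a
strongly regular graph span a space that is stable under left multiplication by `A`, because
`A² = k I + ℓ A + μ Ā` and `A Ā = A J - A - A² = (k - 1 - ℓ) A + (k - μ) Ā`. The structure
constants depend only on the parameters, so every power of `t • A` equals `a I + b A + c Ā` with
coefficients `(a, b, c)` that depend only on `t`, the parameters and the exponent. The entry at
`(u, v)` of such a matrix is `a`, `b` or `c` according as `u = v`, `u ~ v`, or neither.
-/

open Matrix

namespace SimpleGraph

variable {V R : Type*} {G : SimpleGraph V} [DecidableRel G.Adj]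

theorem IsRegularOfDegree.adjMatrix_mul_of_one [Fintype V] [NonAssocSemiring R] {k : ℕ}
    (h : G.IsRegularOfDegree k) : G.adjMatrix R * of 1 = (k : R) • of 1 := by
  ext v w
  simp [h v]

variable [DecidableEq V]

section Semiring

variable [Semiring R]

variable (G) in
def adjCombination (p : R × R × R) : Matrix V V R :=
  p.1 • 1 + p.2.1 • G.adjMatrix R + p.2.2 • Gᶜ.adjMatrix R

theorem adjCombination_apply_self (p : R × R × R) (v : V) : G.adjCombination p v v = p.1 := by
  simp [adjCombination]

theorem adjCombination_apply_of_adj (p : R × R × R) {v w : V} (h : G.Adj v w) :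
    G.adjCombination p v w = p.2.1 := by
  simp [adjCombination, h, G.ne_of_adj h]

theorem adjCombination_apply_of_ne_of_not_adj (p : R × R × R) {v w : V} (hne : v ≠ w)
    (h : ¬G.Adj v w) : G.adjCombination p v w = p.2.2 := by
  simp [adjCombination, h, hne]

theorem adjCombination_one_zero_zero : G.adjCombination ((1, 0, 0) : R × R × R) = 1 := by
  simp [adjCombination]

theorem smul_adjCombination (t : R) (p : R × R × R) :
    t • G.adjCombination p = G.adjCombination (t • p) := by
  simp only [adjCombination, smul_add, smul_smul, Prod.smul_fst, Prod.smul_snd, smul_eq_mul]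

theorem one_add_adjMatrix_add_adjMatrix_compl :
    1 + G.adjMatrix R + Gᶜ.adjMatrix R = of 1 := by
  ext v w
  by_cases hvw : v = w
  · simp [hvw]
  · by_cases hadj : G.Adj v w <;> simp [one_apply_ne hvw, hvw, hadj]

theorem IsSRGWith.adjMatrix_mul_self [Fintype V] {N k ℓ μ : ℕ} (h : G.IsSRGWith N k ℓ μ) :
    G.adjMatrix R * G.adjMatrix R =
      (k : R) • 1 + (ℓ : R) • G.adjMatrix R + (μ : R) • Gᶜ.adjMatrix R := by
  simp only [← sq, h.matrix_eq, Nat.cast_smul_eq_nsmul]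

end Semiring

section CommRing

variable [Fintype V] [CommRing R] {N k ℓ μ : ℕ}

theorem IsSRGWith.adjMatrix_mul_adjMatrix_compl (h : G.IsSRGWith N k ℓ μ) :
    G.adjMatrix R * Gᶜ.adjMatrix R =
      ((k : R) - 1 - ℓ) • G.adjMatrix R + ((k : R) - μ) • Gᶜ.adjMatrix R := by
  calc G.adjMatrix R * Gᶜ.adjMatrix R
      = G.adjMatrix R * (1 + G.adjMatrix R + Gᶜ.adjMatrix R) - G.adjMatrix R
          - G.adjMatrix R * G.adjMatrix R := by
        rw [mul_add, mul_add, mul_one]; abel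
    _ = (k : R) • (1 + G.adjMatrix R + Gᶜ.adjMatrix R) - G.adjMatrix R
          - ((k : R) • 1 + (ℓ : R) • G.adjMatrix R + (μ : R) • Gᶜ.adjMatrix R) := by
        rw [one_add_adjMatrix_add_adjMatrix_compl, h.regular.adjMatrix_mul_of_one,
          h.adjMatrix_mul_self]
    _ = _ := by module

def srgStep (k ℓ μ : R) (p : R × R × R) : R × R × R :=
  (k * p.2.1, p.1 + ℓ * p.2.1 + (k - 1 - ℓ) * p.2.2, μ * p.2.1 + (k - μ) * p.2.2)

theorem IsSRGWith.adjMatrix_mul_adjCombination (h : G.IsSRGWith N k ℓ μ) (p : R × R × R) :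
    G.adjMatrix R * G.adjCombination p = G.adjCombination (srgStep (k : R) ℓ μ p) := by
  simp only [adjCombination, srgStep, mul_add, mul_smul_comm, mul_one, h.adjMatrix_mul_self,
    h.adjMatrix_mul_adjMatrix_compl]
  module

theorem IsSRGWith.smul_adjMatrix_pow (h : G.IsSRGWith N k ℓ μ) (t : R) (n : ℕ) :
    (t • G.adjMatrix R) ^ n =
      G.adjCombination ((fun p ↦ t • srgStep (k : R) ℓ μ p)^[n] (1, 0, 0)) := by
  induction n with
  | zero => exact adjCombination_one_zero_zero.symm
  | succ n ih =>
    rw [pow_succ', ih, Function.iterate_succ_apply', smul_mul_assoc,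
      h.adjMatrix_mul_adjCombination, smul_adjCombination]

end CommRing

end SimpleGraph

open SimpleGraph in
theorem rrwp_cannot_distinguish_srg_general
    {V₁ V₂ : Type*} [Fintype V₁] [DecidableEq V₁] [Fintype V₂] [DecidableEq V₂]
    (G₁ : SimpleGraph V₁) (G₂ : SimpleGraph V₂)
    [DecidableRel G₁.Adj] [DecidableRel G₂.Adj]
    (N k ℓ μ : ℕ)
    (h₁ : G₁.IsSRGWith N k ℓ μ) (h₂ : G₂.IsSRGWith N k ℓ μ)
    (M₁ : Matrix V₁ V₁ ℝ) (M₂ : Matrix V₂ V₂ ℝ)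
    (hM₁ : M₁ = (k : ℝ)⁻¹ • G₁.adjMatrix ℝ)
    (hM₂ : M₂ = (k : ℝ)⁻¹ • G₂.adjMatrix ℝ) :
    ∀ n : ℕ,
      (∀ (u : V₁) (u' : V₂), (M₁ ^ n) u u = (M₂ ^ n) u' u') ∧
      (∀ (u v : V₁) (u' v' : V₂), G₁.Adj u v → G₂.Adj u' v' →
        (M₁ ^ n) u v = (M₂ ^ n) u' v') ∧
      (∀ (u v : V₁) (u' v' : V₂), u ≠ v → ¬ G₁.Adj u v → u' ≠ v' → ¬ G₂.Adj u' v' →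
        (M₁ ^ n) u v = (M₂ ^ n) u' v') := by
  intro n
  rw [hM₁, hM₂, h₁.smul_adjMatrix_pow, h₂.smul_adjMatrix_pow]
  refine ⟨fun u u' ↦ ?_, fun u v u' v' hadj hadj' ↦ ?_, fun u v u' v' hne hadj hne' hadj' ↦ ?_⟩
  · rw [adjCombination_apply_self, adjCombination_apply_self]
  · rw [adjCombination_apply_of_adj _ hadj, adjCombination_apply_of_adj _ hadj']
  · rw [adjCombination_apply_of_ne_of_not_adj _ hne hadj,
      adjCombination_apply_of_ne_of_not_adj _ hne' hadj']

/-- RRWP encodings cannot distinguish two strongly regular graphs with the same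
parameters `(N, k, ℓ, μ)`: for every step `n`, the entries of the `n`-th power of the
random-walk matrix `M = k⁻¹ • A` depend only on the parameters and on whether the pair of
vertices is equal, adjacent, or distinct non-adjacent. -/
theorem rrwp_cannot_distinguish_srg
    {V₁ V₂ : Type*} [Fintype V₁] [DecidableEq V₁] [Fintype V₂] [DecidableEq V₂]
    (G₁ : SimpleGraph V₁) (G₂ : SimpleGraph V₂)
    [DecidableRel G₁.Adj] [DecidableRel G₂.Adj]
    (N k ℓ μ : ℕ) (hk : 1 ≤ k)
    (h₁ : G₁.IsSRGWith N k ℓ μ) (h₂ : G₂.IsSRGWith N k ℓ μ)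
    (M₁ : Matrix V₁ V₁ ℝ) (M₂ : Matrix V₂ V₂ ℝ)
    (hM₁ : M₁ = (k : ℝ)⁻¹ • G₁.adjMatrix ℝ)
    (hM₂ : M₂ = (k : ℝ)⁻¹ • G₂.adjMatrix ℝ) :
    ∀ n : ℕ,
      (∀ (u : V₁) (u' : V₂), (M₁ ^ n) u u = (M₂ ^ n) u' u') ∧
      (∀ (u v : V₁) (u' v' : V₂), G₁.Adj u v → G₂.Adj u' v' →
        (M₁ ^ n) u v = (M₂ ^ n) u' v') ∧
      (∀ (u v : V₁) (u' v' : V₂), u ≠ v → ¬ G₁.Adj u v → u' ≠ v' → ¬ G₂.Adj u' v' →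
        (M₁ ^ n) u v = (M₂ ^ n) u' v') :=
  rrwp_cannot_distinguish_srg_general G₁ G₂ N k ℓ μ h₁ h₂ M₁ M₂ hM₁ hM₂
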